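/- arXiv:1905.11243 — 3 statements merged into one kernel-verified Lean document; each statement's English description precedes it below -/
import Mathlib

section
/- Let L be a Leibniz A-algebra over a field F and let B be an ideal of L. Then the quotient Leibniz algebra L/B is also an A-algebra. -/
/-- A (right) Leibniz algebra structure on an `F`-vector space `L`:
a bilinear bracket satisfying `[x,[y,z]] = [[x,y],z] - [[x,z],y]`. -/
structure LeibnizAlg (F : Type*) (L : Type*) [Field F] [AddCommGroup L] [Module F L] where
  bracket : L →ₗ[F] L →ₗ[F] L
  leibniz : ∀ x y z : L,
    bracket x (bracket y z) = bracket (bracket x y) z - bracket (bracket x z) y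

namespace LeibnizAlg

variable {F : Type*} {L : Type*} [Field F] [AddCommGroup L] [Module F L]

/-- The product `[M, N]` of two subspaces: the span of all brackets `[m, n]`. -/
def prod (A : LeibnizAlg F L) (M N : Submodule F L) : Submodule F L :=
  Submodule.span F {z : L | ∃ m ∈ M, ∃ n ∈ N, z = A.bracket m n}

/-- A subalgebra: a subspace closed under the product. -/
def IsSubalgebra (A : LeibnizAlg F L) (S : Submodule F L) : Prop :=
  A.prod S S ≤ S

/-- A (two-sided) ideal: `[I, L] ⊆ I` and `[L, I] ⊆ I`. -/
def IsIdeal (A : LeibnizAlg F L) (I : Submodule F L) : Prop :=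
  A.prod I ⊤ ≤ I ∧ A.prod ⊤ I ≤ I

/-- Lower central series of a subspace `U`: `lcs U 0 = U = U¹`,
`lcs U k = U^(k+1)`, i.e. `lcs U (k+1) = [lcs U k, U]`. -/
def lcs (A : LeibnizAlg F L) (U : Submodule F L) : ℕ → Submodule F L
  | 0 => U
  | k + 1 => A.prod (lcs A U k) U

/-- `U` is nilpotent: `U^(n+1) = 0` for some `n`. -/
def IsNilpotentSub (A : LeibnizAlg F L) (U : Submodule F L) : Prop :=
  ∃ n : ℕ, A.lcs U n = ⊥

/-- `U` is abelian: `[U, U] = 0`. -/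
def IsAbelian (A : LeibnizAlg F L) (U : Submodule F L) : Prop :=
  A.prod U U = ⊥

/-- An `A`-algebra: every nilpotent subalgebra is abelian. -/
def IsAAlgebra (A : LeibnizAlg F L) : Prop :=
  ∀ U : Submodule F L, A.IsSubalgebra U → A.IsNilpotentSub U → A.IsAbelian U

/-- Derived series: `derSeries 0 = L`, `derSeries (k+1) = [derSeries k, derSeries k]`. -/
def derSeries (A : LeibnizAlg F L) : ℕ → Submodule F L
  | 0 => ⊤
  | k + 1 => A.prod (derSeries A k) (derSeries A k)

/-- `L` is solvable: some term of the derived series vanishes. -/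
def IsSolvable (A : LeibnizAlg F L) : Prop :=
  ∃ n : ℕ, A.derSeries n = ⊥

/-- The centralizer `Z_L(U)` of a subspace `U`. -/
def centralizer (A : LeibnizAlg F L) (U : Submodule F L) : Submodule F L where
  carrier := {x : L | ∀ u ∈ U, A.bracket x u = 0 ∧ A.bracket u x = 0}
  add_mem' := by
    intro a b ha hb u hu
    refine ⟨?_, ?_⟩
    · rw [map_add, LinearMap.add_apply, (ha u hu).1, (hb u hu).1, add_zero]
    · rw [map_add, (ha u hu).2, (hb u hu).2, add_zero]
  zero_mem' := by
    intro u hu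
    refine ⟨?_, ?_⟩
    · rw [map_zero, LinearMap.zero_apply]
    · rw [map_zero]
  smul_mem' := by
    intro c a ha u hu
    refine ⟨?_, ?_⟩
    · rw [map_smul, LinearMap.smul_apply, (ha u hu).1, smul_zero]
    · rw [map_smul, (ha u hu).2, smul_zero]

/-- The centre of the subalgebra `M`: elements of `M` centralizing `M`. -/
def centerOf (A : LeibnizAlg F L) (M : Submodule F L) : Submodule F L :=
  M ⊓ A.centralizer M

/-- `N` is the nilradical: the largest nilpotent ideal. -/
def IsNilradical (A : LeibnizAlg F L) (N : Submodule F L) : Prop :=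
  A.IsIdeal N ∧ A.IsNilpotentSub N ∧
    ∀ I : Submodule F L, A.IsIdeal I → A.IsNilpotentSub I → I ≤ N

/-- A minimal ideal: a nonzero ideal containing no ideal other than `0` and itself. -/
def IsMinimalIdeal (A : LeibnizAlg F L) (I : Submodule F L) : Prop :=
  A.IsIdeal I ∧ I ≠ ⊥ ∧ ∀ J : Submodule F L, A.IsIdeal J → J ≤ I → J = ⊥ ∨ J = I

/-- A maximal subalgebra. -/
def IsMaximalSubalgebra (A : LeibnizAlg F L) (M : Submodule F L) : Prop :=
  A.IsSubalgebra M ∧ M ≠ ⊤ ∧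
    ∀ S : Submodule F L, A.IsSubalgebra S → M ≤ S → S = M ∨ S = ⊤

/-- `L` is φ-free: every ideal contained in all maximal subalgebras is zero. -/
def IsPhiFree (A : LeibnizAlg F L) : Prop :=
  ∀ I : Submodule F L, A.IsIdeal I →
    (∀ M : Submodule F L, A.IsMaximalSubalgebra M → I ≤ M) → I = ⊥

/-- `Asoc L`: the sum of the abelian minimal ideals. -/
def asoc (A : LeibnizAlg F L) : Submodule F L :=
  sSup {I : Submodule F L | A.IsMinimalIdeal I ∧ A.IsAbelian I}

/-- A Cartan subalgebra: a nilpotent, self-normalizing subalgebra. -/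
def IsCartan (A : LeibnizAlg F L) (C : Submodule F L) : Prop :=
  A.IsSubalgebra C ∧ A.IsNilpotentSub C ∧
    ∀ x : L, (∀ c ∈ C, A.bracket x c ∈ C ∧ A.bracket c x ∈ C) → x ∈ C

/-- A maximal nilpotent subalgebra. -/
def IsMaxNilpotentSubalgebra (A : LeibnizAlg F L) (U : Submodule F L) : Prop :=
  A.IsSubalgebra U ∧ A.IsNilpotentSub U ∧
    ∀ V : Submodule F L, A.IsSubalgebra V → A.IsNilpotentSub V → U ≤ V → V = U

end LeibnizAlg

/-! Let `Ū` be a nilpotent subalgebra of `L/B` and `U` its preimage, so that `U^(n+1) ⊆ B`.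
Choose a subalgebra `C ≤ U` minimal with `U = B + C`. For `v ∈ C` the right multiplication
`R_v` is a derivation of `C`, so its Fitting null component is a subalgebra, while its Fitting
one-component lies in `C^(m+1) ⊆ B`; minimality of `C` forces `R_v` to be nilpotent on `C`.
By Engel's theorem `C` is nilpotent, hence abelian, and then `[U, U] ⊆ [B + C, B + C] ⊆ B`,
i.e. `Ū` is abelian. -/

namespace LeibnizAlg

variable {F L : Type*} [Field F] [AddCommGroup L] [Module F L] (A : LeibnizAlg F L)

theorem bracket_mem_prod {M N : Submodule F L} {m n : L} (hm : m ∈ M) (hn : n ∈ N) :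
    A.bracket m n ∈ A.prod M N :=
  Submodule.subset_span ⟨m, hm, n, hn, rfl⟩

theorem prod_le {M N X : Submodule F L} (h : ∀ m ∈ M, ∀ n ∈ N, A.bracket m n ∈ X) :
    A.prod M N ≤ X := by
  rw [prod, Submodule.span_le]
  rintro _ ⟨m, hm, n, hn, rfl⟩
  exact h m hm n hn

theorem prod_mono {M M' N N' : Submodule F L} (hM : M ≤ M') (hN : N ≤ N') :
    A.prod M N ≤ A.prod M' N' :=
  A.prod_le fun _ hm _ hn => A.bracket_mem_prod (hM hm) (hN hn)

theorem lcs_mono {M N : Submodule F L} (h : M ≤ N) (k : ℕ) : A.lcs M k ≤ A.lcs N k := by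
  induction k with
  | zero => exact h
  | succ k ih => exact A.prod_mono ih h

theorem IsSubalgebra.lcs_antitone {A : LeibnizAlg F L} {M : Submodule F L}
    (hM : A.IsSubalgebra M) : Antitone (A.lcs M) := by
  refine antitone_nat_of_succ_le fun k => ?_
  induction k with
  | zero => exact hM
  | succ k ih => exact A.prod_mono ih le_rfl

theorem isSubalgebra_top : A.IsSubalgebra ⊤ := le_top

theorem IsIdeal.prod_sup_le_of_isAbelian {A : LeibnizAlg F L} {B C : Submodule F L} (hB : A.IsIdeal B)
    (hC : A.IsAbelian C) : A.prod (B ⊔ C) (B ⊔ C) ≤ B := by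
  refine A.prod_le fun x hx y hy => ?_
  obtain ⟨b, hb, c, hc, rfl⟩ := Submodule.mem_sup.mp hx
  obtain ⟨b', hb', c', hc', rfl⟩ := Submodule.mem_sup.mp hy
  have hcc' : A.bracket c c' = 0 := (Submodule.mem_bot F).mp (hC ▸ A.bracket_mem_prod hc hc')
  have hexpand : A.bracket (b + c) (b' + c') = A.bracket b (b' + c') + A.bracket c b' := by
    simp only [map_add, LinearMap.add_apply, hcc']
    abel
  rw [hexpand]
  exact B.add_mem (hB.1 (A.bracket_mem_prod hb Submodule.mem_top))
    (hB.2 (A.bracket_mem_prod Submodule.mem_top hb'))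

section Hom

variable {L' : Type*} [AddCommGroup L'] [Module F L']

def IsHom (A' : LeibnizAlg F L') (f : L →ₗ[F] L') : Prop :=
  ∀ x y, f (A.bracket x y) = A'.bracket (f x) (f y)

variable {A} {A' : LeibnizAlg F L'} {f : L →ₗ[F] L'}

theorem IsHom.map_prod (hf : A.IsHom A' f) (M N : Submodule F L) :
    (A.prod M N).map f = A'.prod (M.map f) (N.map f) := by
  refine le_antisymm ?_ ?_
  · rw [Submodule.map_le_iff_le_comap]
    refine A.prod_le fun m hm n hn => ?_
    rw [Submodule.mem_comap, hf]
    exact A'.bracket_mem_prod (Submodule.mem_map_of_mem hm) (Submodule.mem_map_of_mem hn)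
  · refine A'.prod_le ?_
    rintro _ ⟨m, hm, rfl⟩ _ ⟨n, hn, rfl⟩
    rw [← hf]
    exact Submodule.mem_map_of_mem (A.bracket_mem_prod hm hn)

theorem IsHom.map_lcs (hf : A.IsHom A' f) (M : Submodule F L) (k : ℕ) :
    (A.lcs M k).map f = A'.lcs (M.map f) k := by
  induction k with
  | zero => rfl
  | succ k ih => exact (hf.map_prod _ _).trans (by rw [ih]; rfl)

theorem IsSubalgebra.map {S : Submodule F L} (hS : A.IsSubalgebra S) (hf : A.IsHom A' f) :
    A'.IsSubalgebra (S.map f) := by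
  rw [IsSubalgebra, ← hf.map_prod]
  exact Submodule.map_mono hS

theorem IsSubalgebra.comap {S : Submodule F L'} (hS : A'.IsSubalgebra S) (hf : A.IsHom A' f) :
    A.IsSubalgebra (S.comap f) := by
  rw [IsSubalgebra, ← Submodule.map_le_iff_le_comap, hf.map_prod]
  exact (A'.prod_mono (Submodule.map_comap_le f S) (Submodule.map_comap_le f S)).trans hS

end Hom

section Restrict

variable {A} {S : Submodule F L}

theorem IsSubalgebra.bracket_mem (hS : A.IsSubalgebra S) {x y : L} (hx : x ∈ S) (hy : y ∈ S) :
    A.bracket x y ∈ S :=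
  hS (A.bracket_mem_prod hx hy)

def IsSubalgebra.restrict (hS : A.IsSubalgebra S) : LeibnizAlg F S where
  bracket := LinearMap.mk₂ F (fun x y => ⟨A.bracket x y, hS.bracket_mem x.2 y.2⟩)
    (fun _ _ _ => Subtype.ext (by simp)) (fun _ _ _ => Subtype.ext (by simp))
    (fun _ _ _ => Subtype.ext (by simp)) (fun _ _ _ => Subtype.ext (by simp))
  leibniz x y z := Subtype.ext (A.leibniz x y z)

theorem IsSubalgebra.isHom_subtype (hS : A.IsSubalgebra S) : hS.restrict.IsHom A S.subtype :=
  fun _ _ => rfl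

theorem IsSubalgebra.map_subtype_lcs_top (hS : A.IsSubalgebra S) (k : ℕ) :
    (hS.restrict.lcs ⊤ k).map S.subtype = A.lcs S k := by
  rw [hS.isHom_subtype.map_lcs, Submodule.map_subtype_top]

end Restrict

section Derivation

def IsDerivation (g : Module.End F L) : Prop :=
  ∀ x y, g (A.bracket x y) = A.bracket (g x) y + A.bracket x (g y)

theorem isDerivation_bracket_flip (v : L) : A.IsDerivation (A.bracket.flip v) := fun x y => by
  simp only [LinearMap.flip_apply, A.leibniz x y v]
  abel

variable {A} {g : Module.End F L}

theorem IsDerivation.pow_bracket_eq_zero (hg : A.IsDerivation g) :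
    ∀ {a b : ℕ} {x y : L}, (g ^ a) x = 0 → (g ^ b) y = 0 → (g ^ (a + b)) (A.bracket x y) = 0
  | 0, _, x, _, hx, _ => by simp_all
  | _, 0, _, y, _, hy => by simp_all
  | a + 1, b + 1, x, y, hx, hy => by
    have hgx : (g ^ a) (g x) = 0 := by rwa [← Module.End.mul_apply, ← pow_succ]
    have hgy : (g ^ b) (g y) = 0 := by rwa [← Module.End.mul_apply, ← pow_succ]
    rw [show a + 1 + (b + 1) = a + (b + 1) + 1 by omega, pow_succ, Module.End.mul_apply, hg,
      map_add, hg.pow_bracket_eq_zero hgx hy, show a + (b + 1) = a + 1 + b by omega,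
      hg.pow_bracket_eq_zero hx hgy, add_zero]

theorem IsDerivation.isSubalgebra_iSup_ker_pow (hg : A.IsDerivation g) :
    A.IsSubalgebra (⨆ k, LinearMap.ker (g ^ k)) := by
  have hmem : ∀ x, x ∈ ⨆ k, LinearMap.ker (g ^ k) ↔ ∃ k, (g ^ k) x = 0 := fun x =>
    Submodule.mem_iSup_of_directed _ g.iterateKer.monotone.directed_le
  refine A.prod_le fun x hx y hy => ?_
  obtain ⟨a, hx⟩ := (hmem x).mp hx
  obtain ⟨b, hy⟩ := (hmem y).mp hy
  exact (hmem _).mpr ⟨a + b, hg.pow_bracket_eq_zero hx hy⟩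

end Derivation

section Engel

attribute [local instance] LieRing.ofAssociativeRing

theorem lie_bracket_flip (v w : L) :
    ⁅A.bracket.flip v, A.bracket.flip w⁆ = A.bracket.flip (A.bracket w v) := by
  ext x
  simp only [Ring.lie_def, LinearMap.sub_apply, Module.End.mul_apply, LinearMap.flip_apply,
    A.leibniz x w v]

def rightMulLieSubalgebra : LieSubalgebra F (Module.End F L) :=
  { LinearMap.range A.bracket.flip with
    lie_mem' := by
      rintro _ _ ⟨v, rfl⟩ ⟨w, rfl⟩
      exact ⟨A.bracket w v, (A.lie_bracket_flip v w).symm⟩ }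

theorem lcs_top_le_lowerCentralSeries (k : ℕ) :
    A.lcs ⊤ k ≤ LieModule.lowerCentralSeries F A.rightMulLieSubalgebra L k := by
  induction k with
  | zero => simp [lcs]
  | succ k ih =>
    refine A.prod_le fun x hx v _ => ?_
    rw [LieModule.lowerCentralSeries_succ]
    exact LieSubmodule.lie_mem_lie (x := ⟨A.bracket.flip v, v, rfl⟩) (LieSubmodule.mem_top _)
      (ih hx)

theorem isNilpotentSub_top_of_isNilpotent_bracket_flip [FiniteDimensional F L]
    (h : ∀ v, IsNilpotent (A.bracket.flip v)) : A.IsNilpotentSub ⊤ := by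
  have : LieModule.IsNilpotent A.rightMulLieSubalgebra L := by
    rw [LieModule.isNilpotent_iff_forall' (R := F)]
    rintro ⟨_, v, rfl⟩
    exact h v
  obtain ⟨k, hk⟩ := LieModule.IsNilpotent.nilpotent F A.rightMulLieSubalgebra L
  exact ⟨k, le_bot_iff.mp (by simpa [hk] using A.lcs_top_le_lowerCentralSeries k)⟩

end Engel

section Supplement

theorem range_pow_bracket_flip_le_lcs (v : L) (k : ℕ) :
    LinearMap.range (A.bracket.flip v ^ k) ≤ A.lcs ⊤ k := by
  induction k with
  | zero => exact le_top
  | succ k ih =>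
    rintro _ ⟨x, rfl⟩
    rw [pow_succ', Module.End.mul_apply]
    exact A.bracket_mem_prod (ih ⟨x, rfl⟩) Submodule.mem_top

theorem isNilpotentSub_top_of_lcs_le_of_forall_sup_eq_top [FiniteDimensional F L]
    {B : Submodule F L} {n : ℕ} (hn : A.lcs ⊤ n ≤ B)
    (hB : ∀ D, A.IsSubalgebra D → B ⊔ D = ⊤ → D = ⊤) : A.IsNilpotentSub ⊤ := by
  refine A.isNilpotentSub_top_of_isNilpotent_bracket_flip fun v => ?_
  set g := A.bracket.flip v
  obtain ⟨m, hnm, hker, hcodisjoint⟩ := ((Filter.eventually_ge_atTop n).and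
    (g.eventually_iSup_ker_pow_eq.and g.eventually_codisjoint_ker_pow_range_pow)).exists
  have hsub : A.IsSubalgebra (LinearMap.ker (g ^ m)) :=
    hker ▸ (A.isDerivation_bracket_flip v).isSubalgebra_iSup_ker_pow
  have hrange : LinearMap.range (g ^ m) ≤ B :=
    (A.range_pow_bracket_flip_le_lcs v m).trans ((A.isSubalgebra_top.lcs_antitone hnm).trans hn)
  have hsup : B ⊔ LinearMap.ker (g ^ m) = ⊤ := by
    rw [sup_comm, eq_top_iff]
    exact hcodisjoint.top_le.trans (sup_le_sup_left hrange _)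
  exact ⟨m, LinearMap.ker_eq_top.mp (hB _ hsub hsup)⟩

variable {A}

theorem IsSubalgebra.isNilpotentSub_of_lcs_le [FiniteDimensional F L] {B C : Submodule F L}
    {n : ℕ} (hC : A.IsSubalgebra C) (hn : A.lcs C n ≤ B)
    (hmin : ∀ D, A.IsSubalgebra D → D ≤ C → C ≤ B ⊔ D → D = C) : A.IsNilpotentSub C := by
  have hn' : hC.restrict.lcs ⊤ n ≤ B.comap C.subtype := by
    rwa [← Submodule.map_le_iff_le_comap, hC.map_subtype_lcs_top]
  have hmin' : ∀ D, hC.restrict.IsSubalgebra D → B.comap C.subtype ⊔ D = ⊤ → D = ⊤ := by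
    intro D hD hBD
    refine Submodule.map_injective_of_injective C.injective_subtype ?_
    rw [Submodule.map_subtype_top]
    refine hmin _ (hD.map hC.isHom_subtype) (Submodule.map_subtype_le C D) ?_
    calc C = (B.comap C.subtype ⊔ D).map C.subtype := by rw [hBD, Submodule.map_subtype_top]
      _ ≤ B ⊔ D.map C.subtype := by
        rw [Submodule.map_sup]
        exact sup_le_sup_right (Submodule.map_comap_le _ _) _
  obtain ⟨k, hk⟩ := hC.restrict.isNilpotentSub_top_of_lcs_le_of_forall_sup_eq_top hn' hmin'
  exact ⟨k, by rw [← hC.map_subtype_lcs_top, hk, Submodule.map_bot]⟩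

variable (A)

theorem exists_isSubalgebra_minimal_supplement [FiniteDimensional F L] (B : Submodule F L)
    {U : Submodule F L} (hU : A.IsSubalgebra U) :
    ∃ C, A.IsSubalgebra C ∧ C ≤ U ∧ U ≤ B ⊔ C ∧
      ∀ D, A.IsSubalgebra D → D ≤ C → C ≤ B ⊔ D → D = C := by
  obtain ⟨C, ⟨hC, hCU, hUC⟩, hmin⟩ := wellFounded_lt.has_min
    {D | A.IsSubalgebra D ∧ D ≤ U ∧ U ≤ B ⊔ D} ⟨U, hU, le_rfl, le_sup_right⟩
  refine ⟨C, hC, hCU, hUC, fun D hD hDC hCD => ?_⟩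
  exact eq_of_le_of_not_lt hDC (hmin D ⟨hD, hDC.trans hCU, hUC.trans (sup_le le_sup_left hCD)⟩)

end Supplement

end LeibnizAlg

/-- If `L` is a Leibniz A-algebra over a field `F` and `B` is an ideal of `L`,
then the quotient Leibniz algebra `L/B` (i.e. any Leibniz algebra structure on `L ⧸ B`
whose bracket is induced by that of `L`) is also an A-algebra. -/
theorem quotient_of_A_algebra_is_A_algebra
    {F L : Type*} [Field F] [AddCommGroup L] [Module F L] [FiniteDimensional F L]
    (A : LeibnizAlg F L) (hA : A.IsAAlgebra)
    (B : Submodule F L) (hB : A.IsIdeal B)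
    (Q : LeibnizAlg F (L ⧸ B))
    (hQ : ∀ x y : L, Q.bracket (B.mkQ x) (B.mkQ y) = B.mkQ (A.bracket x y)) :
    Q.IsAAlgebra := by
  rintro Ubar hUbar ⟨n, hn⟩
  have hπ : A.IsHom Q B.mkQ := fun x y => (hQ x y).symm
  set U := Ubar.comap B.mkQ
  have hUmap : U.map B.mkQ = Ubar := Submodule.map_comap_eq_of_surjective B.mkQ_surjective Ubar
  have hU : A.IsSubalgebra U := hUbar.comap hπ
  have hUn : A.lcs U n ≤ B := by
    rw [← B.ker_mkQ, LinearMap.le_ker_iff_map, hπ.map_lcs, hUmap, hn]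
  obtain ⟨C, hC, hCU, hUC, hCmin⟩ := A.exists_isSubalgebra_minimal_supplement B hU
  have hCab : A.IsAbelian C :=
    hA C hC (hC.isNilpotentSub_of_lcs_le ((A.lcs_mono hCU n).trans hUn) hCmin)
  have hUU : A.prod U U ≤ B := (A.prod_mono hUC hUC).trans (hB.prod_sup_le_of_isAbelian hCab)
  rwa [LeibnizAlg.IsAbelian, ← hUmap, ← hπ.map_prod, ← LinearMap.le_ker_iff_map, B.ker_mkQ]
end

section
/- Let A be an abelian ideal of a Leibniz algebra L and let x ∈ L satisfy [x,x] ∈ A. Then L_x^n(A) ⊆ R_x^{n−1}(A) for all n ≥ 1, where L_x and R_x denote the left and right multiplication operators L_x(y) = [x,y] and R_x(y) = [y,x], and L_x^n(A), R_x^{n−1}(A) denote the images of A under the indicated iterates (with R_x^0(A) = A). -/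
/-! On the image `B = [x, A]` of the abelian ideal `A`, the Leibniz identity together with
`[[x,x], A] = 0` gives `L_x = -R_x`, and `B` is `R_x`-stable because `L_x` and `R_x` commute
on `A`. Hence `L_x^(k+1)(A) = L_x^k(B) = R_x^k(B) ⊆ R_x^k(A)`. -/

section EndPow

variable {R M : Type*} [Ring R] [AddCommGroup M] [Module R M]

theorem Module.End.pow_apply_eq_neg_one_pow_smul_of_eqOn_neg {f g : Module.End R M}
    {S : Submodule R M} (hg : ∀ b ∈ S, g b ∈ S) (hfg : ∀ b ∈ S, f b = -g b) (k : ℕ) :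
    ∀ b ∈ S, (f ^ k) b = (-1 : R) ^ k • (g ^ k) b := by
  induction k with
  | zero => simp
  | succ k ih =>
    intro b hb
    rw [pow_succ, Module.End.mul_apply, hfg b hb, map_neg, ih (g b) (hg b hb),
      pow_succ g, Module.End.mul_apply, pow_succ, mul_neg_one, neg_smul]

theorem Submodule.map_pow_le_of_eqOn_neg {f g : Module.End R M} {S : Submodule R M}
    (hg : ∀ b ∈ S, g b ∈ S) (hfg : ∀ b ∈ S, f b = -g b) (k : ℕ) :
    S.map (f ^ k) ≤ S.map (g ^ k) := by
  rintro _ ⟨b, hb, rfl⟩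
  rw [Module.End.pow_apply_eq_neg_one_pow_smul_of_eqOn_neg hg hfg k b hb]
  exact Submodule.smul_mem _ _ ⟨b, hb, rfl⟩

end EndPow

namespace LeibnizAlg

variable {F L : Type*} [Field F] [AddCommGroup L] [Module F L] {A : LeibnizAlg F L}

theorem IsIdeal.bracket_mem_left {I : Submodule F L} (hI : A.IsIdeal I) {a : L} (ha : a ∈ I)
    (y : L) : A.bracket a y ∈ I :=
  hI.1 (Submodule.subset_span ⟨a, ha, y, trivial, rfl⟩)

theorem IsIdeal.bracket_mem_right {I : Submodule F L} (hI : A.IsIdeal I) {a : L} (ha : a ∈ I)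
    (y : L) : A.bracket y a ∈ I :=
  hI.2 (Submodule.subset_span ⟨y, trivial, a, ha, rfl⟩)

theorem IsAbelian.bracket_eq_zero {U : Submodule F L} (hU : A.IsAbelian U) {a b : L}
    (ha : a ∈ U) (hb : b ∈ U) : A.bracket a b = 0 := by
  have h : A.bracket a b ∈ A.prod U U := Submodule.subset_span ⟨a, ha, b, hb, rfl⟩
  rwa [hU, Submodule.mem_bot] at h

variable (A) in
theorem leftMul_rightMul_comm_apply {x b : L} (h : A.bracket (A.bracket x x) b = 0) :
    A.bracket x (A.bracket b x) = A.bracket (A.bracket x b) x := by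
  rw [A.leibniz, h, sub_zero]

variable (A) in
theorem leftMul_sq_apply_eq_neg_rightMul_leftMul {x b : L}
    (h : A.bracket (A.bracket x x) b = 0) :
    A.bracket x (A.bracket x b) = -A.bracket (A.bracket x b) x := by
  rw [A.leibniz, h, zero_sub]

end LeibnizAlg

theorem leftMul_pow_image_le_rightMul_pow_image_general
    {F L : Type*} [Field F] [AddCommGroup L] [Module F L]
    (A : LeibnizAlg F L) (Asub : Submodule F L)
    (hIdeal : A.IsIdeal Asub) (hAb : A.IsAbelian Asub)
    (x : L) (hx : A.bracket x x ∈ Asub) :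
    ∀ n : ℕ, 1 ≤ n →
      Submodule.map (A.bracket x ^ n) Asub ≤
        Submodule.map (A.bracket.flip x ^ (n - 1)) Asub := by
  have hxx : ∀ {a}, a ∈ Asub → A.bracket (A.bracket x x) a = 0 := hAb.bracket_eq_zero hx
  set B := Asub.map (A.bracket x)
  have hBA : B ≤ Asub := by
    rintro _ ⟨a, ha, rfl⟩
    exact hIdeal.bracket_mem_right ha x
  have hB_stable : ∀ b ∈ B, A.bracket.flip x b ∈ B := by
    rintro _ ⟨a, ha, rfl⟩
    exact ⟨A.bracket a x, hIdeal.bracket_mem_left ha x, A.leftMul_rightMul_comm_apply (hxx ha)⟩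
  have hB_neg : ∀ b ∈ B, A.bracket x b = -A.bracket.flip x b := by
    rintro _ ⟨a, ha, rfl⟩
    exact A.leftMul_sq_apply_eq_neg_rightMul_leftMul (hxx ha)
  intro n hn
  obtain ⟨k, rfl⟩ := Nat.exists_eq_add_of_le' hn
  calc Asub.map (A.bracket x ^ (k + 1)) = B.map (A.bracket x ^ k) := by
        rw [pow_succ, Module.End.mul_eq_comp, Submodule.map_comp]
    _ ≤ B.map (A.bracket.flip x ^ k) := Submodule.map_pow_le_of_eqOn_neg hB_stable hB_neg k
    _ ≤ Asub.map (A.bracket.flip x ^ (k + 1 - 1)) := Submodule.map_mono hBA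

/-- If `Asub` is an abelian ideal of a Leibniz algebra `L` and `[x,x] ∈ Asub`,
then `L_x^n(Asub) ⊆ R_x^{n-1}(Asub)` for all `n ≥ 1`, where `L_x(y) = [x,y]` and
`R_x(y) = [y,x]`. -/
theorem leftMul_pow_image_le_rightMul_pow_image
    {F L : Type*} [Field F] [AddCommGroup L] [Module F L] [FiniteDimensional F L]
    (A : LeibnizAlg F L) (Asub : Submodule F L)
    (hIdeal : A.IsIdeal Asub) (hAb : A.IsAbelian Asub)
    (x : L) (hx : A.bracket x x ∈ Asub) :
    ∀ n : ℕ, 1 ≤ n →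
      Submodule.map (A.bracket x ^ n) Asub ≤
        Submodule.map (A.bracket.flip x ^ (n - 1)) Asub :=
  leftMul_pow_image_le_rightMul_pow_image_general A Asub hIdeal hAb x hx
end

section
/- Let L be a solvable Leibniz algebra with nilradical N. Then the centralizer of N in L is contained in N, i.e. Z_L(N) ⊆ N. -/
namespace LeibnizAlg

variable {F L : Type*} [Field F] [AddCommGroup L] [Module F L] (A : LeibnizAlg F L)

theorem prod_le_iff {M N P : Submodule F L} :
    A.prod M N ≤ P ↔ ∀ m ∈ M, ∀ n ∈ N, A.bracket m n ∈ P := by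
  refine ⟨fun h m hm n hn => h (A.bracket_mem_prod hm hn), fun h => ?_⟩
  rw [prod, Submodule.span_le]
  rintro _ ⟨m, hm, n, hn, rfl⟩
  exact h m hm n hn

theorem prod_sup_left (M M' N : Submodule F L) :
    A.prod (M ⊔ M') N = A.prod M N ⊔ A.prod M' N := by
  refine le_antisymm (A.prod_le_iff.2 fun m hm n hn => ?_)
    (sup_le (A.prod_mono le_sup_left le_rfl) (A.prod_mono le_sup_right le_rfl))
  obtain ⟨a, ha, b, hb, rfl⟩ := Submodule.mem_sup.1 hm
  rw [map_add, LinearMap.add_apply]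
  exact add_mem (Submodule.mem_sup_left (A.bracket_mem_prod ha hn))
    (Submodule.mem_sup_right (A.bracket_mem_prod hb hn))

theorem prod_sup_right (M N N' : Submodule F L) :
    A.prod M (N ⊔ N') = A.prod M N ⊔ A.prod M N' := by
  refine le_antisymm (A.prod_le_iff.2 fun m hm n hn => ?_)
    (sup_le (A.prod_mono le_rfl le_sup_left) (A.prod_mono le_rfl le_sup_right))
  obtain ⟨a, ha, b, hb, rfl⟩ := Submodule.mem_sup.1 hn
  rw [map_add]
  exact add_mem (Submodule.mem_sup_left (A.bracket_mem_prod hm ha))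
    (Submodule.mem_sup_right (A.bracket_mem_prod hm hb))

theorem bracket_bracket_left (a b c : L) :
    A.bracket (A.bracket a b) c = A.bracket a (A.bracket b c) + A.bracket (A.bracket a c) b := by
  rw [A.leibniz a b c]
  abel

variable {A}

theorem IsIdeal.bracket_left_mem {I : Submodule F L} (hI : A.IsIdeal I) (x : L) {u : L}
    (hu : u ∈ I) : A.bracket x u ∈ I :=
  hI.2 (A.bracket_mem_prod Submodule.mem_top hu)

theorem IsIdeal.bracket_right_mem {I : Submodule F L} (hI : A.IsIdeal I) {u : L} (hu : u ∈ I)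
    (x : L) : A.bracket u x ∈ I :=
  hI.1 (A.bracket_mem_prod hu Submodule.mem_top)

theorem IsIdeal.sup {I J : Submodule F L} (hI : A.IsIdeal I) (hJ : A.IsIdeal J) :
    A.IsIdeal (I ⊔ J) :=
  ⟨(A.prod_sup_left I J ⊤).trans_le (sup_le_sup hI.1 hJ.1),
    (A.prod_sup_right ⊤ I J).trans_le (sup_le_sup hI.2 hJ.2)⟩

theorem IsIdeal.inf {I J : Submodule F L} (hI : A.IsIdeal I) (hJ : A.IsIdeal J) :
    A.IsIdeal (I ⊓ J) :=
  ⟨A.prod_le_iff.2 fun _ hu x _ => ⟨hI.bracket_right_mem hu.1 x, hJ.bracket_right_mem hu.2 x⟩,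
    A.prod_le_iff.2 fun x _ _ hu => ⟨hI.bracket_left_mem x hu.1, hJ.bracket_left_mem x hu.2⟩⟩

theorem IsIdeal.prod_self {I : Submodule F L} (hI : A.IsIdeal I) : A.IsIdeal (A.prod I I) := by
  constructor <;> rw [prod_le_iff]
  · intro w hw x _
    induction hw using Submodule.span_induction with
    | mem _ hz =>
      obtain ⟨a, ha, b, hb, rfl⟩ := hz
      rw [bracket_bracket_left]
      exact add_mem (A.bracket_mem_prod ha (hI.bracket_right_mem hb x))
        (A.bracket_mem_prod (hI.bracket_right_mem ha x) hb)
    | zero => simp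
    | add _ _ _ _ h₁ h₂ => simpa using add_mem h₁ h₂
    | smul c _ _ h => simpa using Submodule.smul_mem _ c h
  · intro x _ w hw
    induction hw using Submodule.span_induction with
    | mem _ hz =>
      obtain ⟨a, ha, b, hb, rfl⟩ := hz
      rw [A.leibniz]
      exact sub_mem (A.bracket_mem_prod (hI.bracket_left_mem x ha) hb)
        (A.bracket_mem_prod (hI.bracket_left_mem x hb) ha)
    | zero => simp
    | add _ _ _ _ h₁ h₂ => simpa using add_mem h₁ h₂
    | smul c _ _ h => simpa using Submodule.smul_mem _ c h

theorem isIdeal_derSeries (k : ℕ) : A.IsIdeal (A.derSeries k) := by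
  induction k with
  | zero => exact ⟨le_top, le_top⟩
  | succ k ih => exact ih.prod_self

theorem IsIdeal.centralizer {U : Submodule F L} (hU : A.IsIdeal U) :
    A.IsIdeal (A.centralizer U) := by
  constructor <;> rw [prod_le_iff]
  · intro z hz x _ u hu
    constructor
    · rw [bracket_bracket_left, (hz _ (hU.bracket_left_mem x hu)).1, (hz u hu).1]
      simp
    · rw [A.leibniz, (hz u hu).2, (hz _ (hU.bracket_right_mem hu x)).2]
      simp
  · intro x _ z hz u hu
    constructor
    · rw [bracket_bracket_left, (hz u hu).1, (hz _ (hU.bracket_left_mem x hu)).2]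
      simp
    · rw [A.leibniz, (hz _ (hU.bracket_right_mem hu x)).2, (hz u hu).2]
      simp

theorem IsSolvable.exists_isIdeal_le_not_le_prod_self_le (hA : A.IsSolvable)
    {J N : Submodule F L} (hJ : A.IsIdeal J) (hJN : ¬ J ≤ N) :
    ∃ I, A.IsIdeal I ∧ I ≤ J ∧ ¬ I ≤ N ∧ A.prod I I ≤ N := by
  obtain ⟨n, hn⟩ := hA
  obtain ⟨k, hk, hk'⟩ := Nat.exists_not_and_succ_of_not_zero_of_exists
    (p := fun k => J ⊓ A.derSeries k ≤ N) (by simpa [derSeries] using hJN)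
    ⟨n, by simp [hn]⟩
  refine ⟨J ⊓ A.derSeries k, hJ.inf (isIdeal_derSeries k), inf_le_left, hk, le_trans ?_ hk'⟩
  exact le_inf ((A.prod_mono inf_le_left le_top).trans hJ.1)
    (A.prod_mono inf_le_right inf_le_right)

theorem lcs_le_self {N : Submodule F L} (hN : A.prod ⊤ N ≤ N) (j : ℕ) : A.lcs N j ≤ N := by
  cases j with
  | zero => exact le_rfl
  | succ j => exact (A.prod_mono le_top le_rfl).trans hN

theorem lcs_succ_le_lcs_of_le_centralizer_sup {I N : Submodule F L} (hN : A.prod ⊤ N ≤ N)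
    (hIN : I ≤ A.centralizer N ⊔ N) (hII : A.prod I I ≤ N) (j : ℕ) :
    A.lcs I (j + 1) ≤ A.lcs N j := by
  induction j with
  | zero => exact hII
  | succ j ih =>
    have hZ : A.prod (A.lcs N j) (A.centralizer N) = ⊥ :=
      le_bot_iff.1 <| A.prod_le_iff.2 fun _ hn _ hz => by
        rw [(hz _ (lcs_le_self hN j hn)).2]
        exact zero_mem _
    calc A.lcs I (j + 2) ≤ A.prod (A.lcs N j) (A.centralizer N ⊔ N) := A.prod_mono ih hIN
      _ = A.lcs N (j + 1) := by rw [prod_sup_right, hZ, bot_sup_eq, lcs]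

theorem IsIdeal.prod_sup_self_le {I N : Submodule F L} (hN : A.IsIdeal N)
    (hII : A.prod I I ≤ N) : A.prod (I ⊔ N) (I ⊔ N) ≤ N := by
  rw [prod_sup_left, prod_sup_right]
  exact sup_le (sup_le hII ((A.prod_mono le_top le_rfl).trans hN.2))
    ((A.prod_mono le_rfl le_top).trans hN.1)

end LeibnizAlg

theorem centralizer_nilradical_le_nilradical_general
    {F L : Type*} [Field F] [AddCommGroup L] [Module F L]
    (A : LeibnizAlg F L) (hsolv : A.IsSolvable)
    (N : Submodule F L) (hN : A.IsNilradical N) :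
    A.centralizer N ≤ N := by
  obtain ⟨hNideal, ⟨n, hn⟩, hNmax⟩ := hN
  by_contra hZN
  obtain ⟨I, hI, hIZ, hIN, hII⟩ :=
    hsolv.exists_isIdeal_le_not_le_prod_self_le hNideal.centralizer hZN
  have hK : A.IsNilpotentSub (I ⊔ N) := by
    refine ⟨n + 1, le_bot_iff.1 ?_⟩
    rw [← hn]
    exact LeibnizAlg.lcs_succ_le_lcs_of_le_centralizer_sup hNideal.2 (sup_le_sup_right hIZ N)
      (hNideal.prod_sup_self_le hII) n
  exact hIN (le_sup_left.trans (hNmax _ (hI.sup hNideal) hK))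

/-- If `L` is a solvable Leibniz algebra with nilradical `N`,
then `Z_L(N) ⊆ N`. -/
theorem centralizer_nilradical_le_nilradical
    {F L : Type*} [Field F] [AddCommGroup L] [Module F L] [FiniteDimensional F L]
    (A : LeibnizAlg F L) (hsolv : A.IsSolvable)
    (N : Submodule F L) (hN : A.IsNilradical N) :
    A.centralizer N ≤ N :=
  centralizer_nilradical_le_nilradical_general A hsolv N hN
end
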